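/- arXiv:1601.01158 — 4 statements merged into one kernel-verified Lean document; each statement's English description precedes it below -/
import Mathlib

section
/- Let R be a commutative ring and consider the free noncommutative power series algebra R⟨⟨e₀,e₁⟩⟩ with the shuffle coproduct Δ_sh determined by Δ_sh(e₀) = e₀⊗1 + 1⊗e₀ and Δ_sh(e₁) = e₁⊗1 + 1⊗e₁ on the completed tensor product. Then an element u of R⟨⟨e₀,e₁⟩⟩ ⊗̂ R⟨⟨e₀,e₁⟩⟩ commutes with Δ_sh(e₁) = e₁⊗1 + 1⊗e₁ if and only if u belongs to R⟨⟨e₁⟩⟩ ⊗̂ R⟨⟨e₁⟩⟩, i.e. the coefficient u[w⊗w'] vanishes whenever at least one of the words w, w' contains the letter e₀. -/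
/-!
Comparing the coefficients of `e₁ a ⊗ b` on both sides of `Δ(e₁) u = u Δ(e₁)` gives
`u[a ⊗ b] = u[e₁ a' ⊗ b]` if `a = a' e₁`, and `u[a ⊗ b] = 0` if `a` ends in `e₀`, up to
coefficients with a shorter right-hand word. By induction on the length of `b`, rotating the
trailing `e₁`s of a word `a` containing `e₀` to its front therefore kills `u[a ⊗ b]`; the
other factor follows by symmetry. Conversely, on pairs of powers of `e₁` both products have
the same coefficients, and elsewhere both vanish.
-/

namespace ShuffleCommutant

section Lists

variable {α : Type*} {x y : α} {w : List α}

lemma mem_tail_of_head?_eq (hxy : x ≠ y) (hw : w.head? = some y) (hx : x ∈ w) : x ∈ w.tail := by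
  cases w with
  | nil => simp at hw
  | cons z t =>
    obtain rfl : z = y := by simpa using hw
    exact List.mem_of_ne_of_mem hxy hx

lemma mem_dropLast_of_getLast?_eq (hxy : x ≠ y) (hw : w.getLast? = some y) (hx : x ∈ w) :
    x ∈ w.dropLast := by
  obtain rfl | ⟨c, z, rfl⟩ := List.eq_nil_or_concat w
  · simp at hw
  · rw [List.concat_eq_append, List.getLast?_concat, Option.some_inj] at hw
    subst hw
    simpa [hxy] using hx

end Lists

variable {R : Type*} [AddCommMonoid R] (u : List Bool → List Bool → R)

/-- Coefficients of `(e₁ ⊗ 1 + 1 ⊗ e₁) * u`, with `false` encoding `e₀` and `true` encoding `e₁`. -/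
def deltaMul (w w' : List Bool) : R :=
  (if w.head? = some true then u w.tail w' else 0) +
    (if w'.head? = some true then u w w'.tail else 0)

/-- Coefficients of `u * (e₁ ⊗ 1 + 1 ⊗ e₁)`. -/
def mulDelta (w w' : List Bool) : R :=
  (if w.getLast? = some true then u w.dropLast w' else 0) +
    (if w'.getLast? = some true then u w w'.dropLast else 0)

def CommutesWithDelta : Prop := ∀ w w', deltaMul u w w' = mulDelta u w w'

/-- `u` lies in `R⟨⟨e₁⟩⟩ ⊗̂ R⟨⟨e₁⟩⟩`. -/
def IsSupportedOnE₁ : Prop := ∀ w w', false ∈ w ∨ false ∈ w' → u w w' = 0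

variable {u}

lemma CommutesWithDelta.flip (hc : CommutesWithDelta u) : CommutesWithDelta (flip u) := by
  intro w w'
  simpa only [deltaMul, mulDelta, Function.flip_def, add_comm] using hc w' w

lemma CommutesWithDelta.apply_concat (hc : CommutesWithDelta u) {c : List Bool} {x : Bool}
    {b : List Bool} (hshort : ∀ b', b'.length < b.length → u (true :: c ++ [x]) b' = 0) :
    u (c ++ [x]) b = if x = true then u (true :: c) b else 0 := by
  have H := hc ((true :: c) ++ [x]) b
  rw [deltaMul, mulDelta, List.getLast?_concat, List.dropLast_concat] at H
  cases b with
  | nil => simpa using H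
  | cons y b =>
    have htail : u (true :: (c ++ [x])) b = 0 := hshort b (by simp)
    have hdrop : u (true :: (c ++ [x])) (y :: b).dropLast = 0 := hshort _ (by simp)
    simpa [htail, hdrop] using H

lemma CommutesWithDelta.apply_eq_zero_of_shorter (hc : CommutesWithDelta u) {b : List Bool}
    (hshort : ∀ a b', b'.length < b.length → false ∈ a → u a b' = 0) :
    ∀ a, false ∈ a → u a b = 0 := by
  suffices ∀ a, false ∈ a → ∀ n, u (List.replicate n true ++ a) b = 0 from
    fun a ha => this a ha 0
  intro a
  induction a using List.reverseRecOn with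
  | nil => simp
  | append_singleton c x ih =>
    intro ha n
    have hrot := hc.apply_concat (c := List.replicate n true ++ c) (x := x) (b := b)
      fun b' hb' => hshort _ b' hb' (by simp_all)
    rw [← List.append_assoc, hrot]
    cases x with
    | false => rfl
    | true =>
      have hc' : false ∈ c := by simpa using ha
      exact ih hc' (n + 1)

theorem CommutesWithDelta.apply_eq_zero (hc : CommutesWithDelta u) (a b : List Bool)
    (ha : false ∈ a) : u a b = 0 :=
  hc.apply_eq_zero_of_shorter (fun a' b' _ ha' => hc.apply_eq_zero a' b' ha') a ha
termination_by b.length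

theorem CommutesWithDelta.isSupportedOnE₁ (hc : CommutesWithDelta u) : IsSupportedOnE₁ u
  | w, w', .inl hw => hc.apply_eq_zero w w' hw
  | w, w', .inr hw' => hc.flip.apply_eq_zero w' w hw'

lemma ite_head?_eq_zero {v : List Bool → R} (hv : ∀ a, false ∈ a → v a = 0) {w : List Bool}
    (hw : false ∈ w) : (if w.head? = some true then v w.tail else 0) = 0 := by
  split_ifs with h
  exacts [hv _ (mem_tail_of_head?_eq Bool.false_ne_true h hw), rfl]

lemma ite_getLast?_eq_zero {v : List Bool → R} (hv : ∀ a, false ∈ a → v a = 0) {w : List Bool}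
    (hw : false ∈ w) : (if w.getLast? = some true then v w.dropLast else 0) = 0 := by
  split_ifs with h
  exacts [hv _ (mem_dropLast_of_getLast?_eq Bool.false_ne_true h hw), rfl]

lemma IsSupportedOnE₁.deltaMul_eq_zero (hs : IsSupportedOnE₁ u) {w w' : List Bool}
    (h : false ∈ w ∨ false ∈ w') : deltaMul u w w' = 0 := by
  rcases h with h | h
  · rw [deltaMul, ite_head?_eq_zero (fun a ha => hs a w' (.inl ha)) h, hs w _ (.inl h)]
    simp
  · rw [deltaMul, ite_head?_eq_zero (fun a ha => hs w a (.inr ha)) h, hs _ w' (.inr h)]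
    simp

lemma IsSupportedOnE₁.mulDelta_eq_zero (hs : IsSupportedOnE₁ u) {w w' : List Bool}
    (h : false ∈ w ∨ false ∈ w') : mulDelta u w w' = 0 := by
  rcases h with h | h
  · rw [mulDelta, ite_getLast?_eq_zero (fun a ha => hs a w' (.inl ha)) h, hs w _ (.inl h)]
    simp
  · rw [mulDelta, ite_getLast?_eq_zero (fun a ha => hs w a (.inr ha)) h, hs _ w' (.inr h)]
    simp

lemma deltaMul_replicate_eq_mulDelta (u : List Bool → List Bool → R) (n m : ℕ) :
    deltaMul u (List.replicate n true) (List.replicate m true) =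
      mulDelta u (List.replicate n true) (List.replicate m true) := by
  simp only [deltaMul, mulDelta, List.head?_replicate, List.getLast?_replicate,
    List.tail_replicate, List.dropLast_replicate]

lemma IsSupportedOnE₁.commutesWithDelta (hs : IsSupportedOnE₁ u) : CommutesWithDelta u := by
  intro w w'
  by_cases h : false ∈ w ∨ false ∈ w'
  · rw [hs.deltaMul_eq_zero h, hs.mulDelta_eq_zero h]
  · have all_true : ∀ a : List Bool, false ∉ a → a = List.replicate a.length true :=
      fun a ha => List.eq_replicate_of_mem fun b hb => by cases b <;> simp_all
    obtain ⟨hw, hw'⟩ := not_or.mp h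
    rw [all_true w hw, all_true w' hw']
    exact deltaMul_replicate_eq_mulDelta u _ _

theorem commutesWithDelta_iff_isSupportedOnE₁ :
    CommutesWithDelta u ↔ IsSupportedOnE₁ u :=
  ⟨CommutesWithDelta.isSupportedOnE₁, IsSupportedOnE₁.commutesWithDelta⟩

end ShuffleCommutant

/-- Commutant of Δ_sh(e₁) = e₁⊗1 + 1⊗e₁ in the completed tensor square of
R⟨⟨e₀,e₁⟩⟩. Words on {e₀,e₁} are modelled as lists of booleans
(`false` = e₀, `true` = e₁) and an element of the completed tensor product is
a family of coefficients indexed by pairs of words. Left multiplication by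
e₁⊗1 + 1⊗e₁ strips a leading e₁ in one of the factors; right multiplication
strips a trailing e₁. An element commutes with e₁⊗1 + 1⊗e₁ iff it is
supported on pairs of words in the letter e₁ only. -/
theorem stmt_5 (R : Type*) [CommRing R] (u : List Bool → List Bool → R) :
    (∀ w w' : List Bool,
      ((if w.head? = some true then u w.tail w' else 0) +
        (if w'.head? = some true then u w w'.tail else 0)) =
      ((if w.getLast? = some true then u w.dropLast w' else 0) +
        (if w'.getLast? = some true then u w w'.dropLast else 0)))
    ↔ (∀ w w' : List Bool, (false ∈ w ∨ false ∈ w') → u w w' = 0) :=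
  ShuffleCommutant.commutesWithDelta_iff_isSupportedOnE₁
end

section
/- The harmonic-sum functions n ↦ H_s(n) := ∑_{0<k<n} 1/k^s, for s ranging over positive integers, together with the constant function 1, are linearly independent over ℚ as functions ℕ₊ → ℚ. More precisely, if c₀ + ∑_{s=1}^{S} c_s H_s(n) = 0 for all n ≥ 1 with rational c₀, c₁,…,c_S, then c₀ = c₁ = ⋯ = c_S = 0. -/
open Finset

/-- The harmonic-sum functions H_s(n) = ∑_{0<k<n} 1/k^s together with the
constant function 1 are linearly independent over ℚ. -/
theorem stmt_12 (S : ℕ) (c : ℕ → ℚ)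
    (hrel : ∀ n : ℕ, 1 ≤ n →
      c 0 + ∑ s ∈ Finset.Icc 1 S, c s * (∑ k ∈ Finset.Ioo 0 n, (1 : ℚ) / (k : ℚ) ^ s) = 0) :
    ∀ s : ℕ, s ≤ S → c s = 0 := by
  -- c 0 = 0 from n = 1
  have h1 := hrel 1 le_rfl
  rw [show Finset.Ioo 0 1 = (∅ : Finset ℕ) from rfl] at h1
  simp at h1
  -- difference: for n ≥ 1, ∑ s, c s / n^s = 0
  have hdiff : ∀ n : ℕ, 1 ≤ n →
      ∑ s ∈ Finset.Icc 1 S, c s * (1 / (n : ℚ) ^ s) = 0 := by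
    intro n hn
    have hA := hrel n hn
    have hB := hrel (n + 1) (by omega)
    have hsplit : ∀ s : ℕ, ∑ k ∈ Finset.Ioo 0 (n + 1), (1 : ℚ) / (k : ℚ) ^ s
        = (∑ k ∈ Finset.Ioo 0 n, (1 : ℚ) / (k : ℚ) ^ s) + 1 / (n : ℚ) ^ s := by
      intro s
      have : Finset.Ioo 0 (n + 1) = insert n (Finset.Ioo 0 n) := by
        ext k; simp [Finset.mem_Ioo, Finset.mem_insert]; omega
      rw [this, Finset.sum_insert (by simp)]
      ring
    have := sub_eq_zero.mpr (hB.trans hA.symm)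
    rw [← this]
    simp only [hsplit, mul_add, Finset.sum_add_distrib]
    ring
  -- polynomial
  set P : Polynomial ℚ := ∑ s ∈ Finset.Icc 1 S, Polynomial.C (c s) * Polynomial.X ^ (S - s) with hP
  have hroot : ∀ n : ℕ, 1 ≤ n → P.eval (n : ℚ) = 0 := by
    intro n hn
    have hn0 : (n : ℚ) ≠ 0 := by positivity
    have := hdiff n hn
    have : (n : ℚ) ^ S * ∑ s ∈ Finset.Icc 1 S, c s * (1 / (n : ℚ) ^ s) = 0 := by
      rw [this, mul_zero]
    rw [Finset.mul_sum] at this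
    rw [hP]
    simp only [Polynomial.eval_finset_sum, Polynomial.eval_mul, Polynomial.eval_C,
      Polynomial.eval_pow, Polynomial.eval_X]
    rw [← this]
    apply Finset.sum_congr rfl
    intro s hs
    simp only [Finset.mem_Icc] at hs
    rw [pow_sub₀ _ hn0 hs.2]
    field_simp
  have hP0 : P = 0 := by
    apply Polynomial.eq_zero_of_infinite_isRoot
    apply Set.Infinite.mono (s := Set.range (fun n : ℕ => ((n + 1 : ℕ) : ℚ)))
    · rintro x ⟨n, rfl⟩
      exact hroot (n + 1) (by omega)
    · apply Set.infinite_range_of_injective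
      intro a b h
      simp only [Nat.cast_inj] at h
      omega
  -- coefficients
  intro s hs
  rcases Nat.eq_zero_or_pos s with rfl | hs1
  · exact h1
  have hc : P.coeff (S - s) = c s := by
    rw [hP, Polynomial.finset_sum_coeff,
      Finset.sum_eq_single_of_mem s (by simp only [Finset.mem_Icc]; omega)]
    · simp
    · intro t ht hts
      simp only [Finset.mem_Icc] at ht
      simp only [Polynomial.coeff_C_mul, Polynomial.coeff_X_pow]
      rw [if_neg (by omega), mul_zero]
  rw [← hc, hP0, Polynomial.coeff_zero]
end

section
/- The harmonic number functions H_s(n) = ∑_{0<k<n} 1/k^s (s ≥ 1) are linearly independent over the ring ℚ[n] of polynomial functions of n: if polynomials P₀(n), P₁(n), …, P_S(n) ∈ ℚ[n] satisfy P₀(n) + ∑_{s=1}^{S} P_s(n) H_s(n) = 0 for all positive integers n, then all P_s are the zero polynomial. -/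
/-!
Clearing denominators, the coefficients may be taken in `ℤ[X]`. For a prime `p` and
`p < n ≤ 2p`, the only `k < n` divisible by `p` is `k = p` itself, so `H_s(n)` has `p`-adic norm
exactly `p ^ s`. Evaluating the relation at `n = p + a` with `1 ≤ a < p`, every term other than
`P_S(n) H_S(n)` has `p`-adic norm at most `p ^ (S - 1)`, so the top term must be smaller than
`p ^ S`, i.e. `p ∣ P_S(n)`; as `P_S(n) ≡ P_S(a) [ZMOD p]`, taking `p > |P_S(a)|` forces
`P_S(a) = 0`. So `P_S` has infinitely many roots, and we conclude by induction on `S`.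
-/

open Finset Polynomial

def harmonicSum (s n : ℕ) : ℚ := ∑ k ∈ Ioo 0 n, 1 / (k : ℚ) ^ s

theorem padicNorm_harmonicSum {p : ℕ} [hp : Fact p.Prime] {s n : ℕ} (hs : 1 ≤ s) (hpn : p < n)
    (hn : n ≤ 2 * p) : padicNorm p (harmonicSum s n) = (p : ℚ) ^ s := by
  have hp1 : (1 : ℚ) < p := by exact_mod_cast hp.out.one_lt
  have hrest : padicNorm p (∑ k ∈ (Ioo 0 n).erase p, 1 / (k : ℚ) ^ s) ≤ 1 := by
    refine padicNorm.sum_le' (fun k hk => ?_) zero_le_one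
    obtain ⟨hkp, hk⟩ := mem_erase.1 hk
    obtain ⟨hk0, hkn⟩ := mem_Ioo.1 hk
    have hpk : ¬ p ∣ k := fun hdvd => hkp (Nat.eq_of_dvd_of_lt_two_mul hk0.ne' hdvd (by omega))
    rw [padicNorm.div, padicNorm.one, IsAbsoluteValue.abv_pow (padicNorm p),
      (padicNorm.nat_eq_one_iff k).2 hpk, one_pow, div_one]
  have hmain : padicNorm p (1 / (p : ℚ) ^ s) = (p : ℚ) ^ s := by
    rw [padicNorm.div, padicNorm.one, IsAbsoluteValue.abv_pow (padicNorm p),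
      padicNorm.padicNorm_p_of_prime, inv_pow, one_div, inv_inv]
  have hps : 1 < (p : ℚ) ^ s := one_lt_pow₀ hp1 (by omega)
  rw [harmonicSum, ← add_sum_erase _ _ (mem_Ioo.2 ⟨hp.out.pos, hpn⟩),
    padicNorm.add_eq_max_of_ne (by rw [hmain]; linarith), hmain, max_eq_left (by linarith)]

theorem IsLocalization.exists_mem_forall_smul_eq_map {R K ι : Type*} [CommRing R] [CommRing K]
    [Algebra R K] (M : Submonoid R) [IsLocalization M K] (t : Finset ι) (P : ι → K[X]) :
    ∃ c ∈ M, ∀ i ∈ t, ∃ Q : R[X], Q.map (algebraMap R K) = c • P i := by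
  classical
  induction t using Finset.induction_on with
  | empty => exact ⟨1, M.one_mem, by simp⟩
  | insert i t _ ih =>
    obtain ⟨c, hc, hQ⟩ := ih
    obtain ⟨b, hb, hbP⟩ := integerNormalization_spec M (P i)
    refine ⟨c * b, M.mul_mem hc hb, fun j hj => ?_⟩
    rcases mem_insert.1 hj with rfl | hj
    · exact ⟨c • integerNormalization M (P j), by
        rw [Polynomial.map_smul, hbP, algebraMap_smul, smul_smul]⟩
    · obtain ⟨Q, hQ⟩ := hQ j hj
      exact ⟨b • Q, by rw [Polynomial.map_smul, hQ, algebraMap_smul, smul_smul, mul_comm]⟩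

theorem Polynomial.eq_zero_of_forall_eval_natCast_eq_zero {R : Type*} [CommRing R] [IsDomain R]
    [CharZero R] {P : R[X]} (h : ∀ n : ℕ, 1 ≤ n → P.eval (n : R) = 0) : P = 0 := by
  refine P.eq_zero_of_infinite_isRoot (Set.infinite_of_injective_forall_mem
    (f := fun n : ℕ => ((n + 1 : ℕ) : R)) (fun m n hmn => ?_) fun n => h (n + 1) n.succ_pos)
  simpa using hmn

def IsHarmonicRelation (S : ℕ) (P : ℕ → ℚ[X]) : Prop :=
  ∀ n : ℕ, 1 ≤ n → (P 0).eval (n : ℚ) + ∑ s ∈ Icc 1 S, (P s).eval (n : ℚ) * harmonicSum s n = 0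

namespace IsHarmonicRelation

variable {S : ℕ} {P : ℕ → ℚ[X]}

theorem congr {P' : ℕ → ℚ[X]} (h : IsHarmonicRelation S P) (hP : ∀ s ≤ S, P' s = P s) :
    IsHarmonicRelation S P' := by
  intro n hn
  rw [hP 0 S.zero_le, sum_congr rfl fun s hs => by rw [hP s (mem_Icc.1 hs).2]]
  exact h n hn

theorem smul (h : IsHarmonicRelation S P) (c : ℤ) : IsHarmonicRelation S (c • P) := by
  intro n hn
  simp only [Pi.smul_apply, eval_smul, smul_mul_assoc, ← smul_sum, ← smul_add, h n hn, smul_zero]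

theorem of_succ (h : IsHarmonicRelation (S + 1) P) (hP : P (S + 1) = 0) :
    IsHarmonicRelation S P := by
  intro n hn
  simpa [sum_Icc_succ_top, hP] using h n hn

theorem eval_top_eq_zero {Q : ℕ → ℤ[X]}
    (h : IsHarmonicRelation (S + 1) fun s => (Q s).map (algebraMap ℤ ℚ)) {a : ℕ} (ha : 1 ≤ a) :
    (Q (S + 1)).eval (a : ℤ) = 0 := by
  by_contra hne
  obtain ⟨p, hpa, hp⟩ := Nat.exists_infinite_primes (max a ((Q (S + 1)).eval (a : ℤ)).natAbs + 1)
  have : Fact p.Prime := ⟨hp⟩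
  have hp1 : (1 : ℚ) < p := by exact_mod_cast hp.one_lt
  have hQ : ¬ (p : ℤ) ∣ (Q (S + 1)).eval ((p + a : ℕ) : ℤ) := by
    intro hdvd
    have hsub := sub_dvd_eval_sub ((p + a : ℕ) : ℤ) a (Q (S + 1))
    rw [Nat.cast_add, add_sub_cancel_right] at hsub
    refine hne (Int.eq_zero_of_abs_lt_dvd ((dvd_sub_right hdvd).1 hsub) ?_)
    rw [Int.abs_eq_natAbs]
    omega
  have hrel := h (p + a) (by omega)
  simp only [eval_natCast_map, algebraMap_int_eq, eq_intCast] at hrel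
  rw [sum_Icc_succ_top (by omega), ← add_assoc, add_eq_zero_iff_eq_neg'] at hrel
  have htop : padicNorm p ((Q (S + 1)).eval ((p + a : ℕ) : ℤ) * harmonicSum (S + 1) (p + a))
      = (p : ℚ) ^ (S + 1) := by
    rw [padicNorm.mul, (padicNorm.int_eq_one_iff _).2 hQ, one_mul,
      padicNorm_harmonicSum (by omega) (by omega) (by omega)]
  have hrest : padicNorm p ((((Q 0).eval ((p + a : ℕ) : ℤ) : ℤ) : ℚ) + ∑ s ∈ Icc 1 S,
      (((Q s).eval ((p + a : ℕ) : ℤ) : ℤ) : ℚ) * harmonicSum s (p + a)) ≤ (p : ℚ) ^ S := by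
    refine padicNorm.nonarchimedean.trans (max_le ?_ (padicNorm.sum_le' (fun s hs => ?_) ?_))
    · exact (padicNorm.of_int _).trans (one_le_pow₀ hp1.le)
    · obtain ⟨hs1, hsS⟩ := mem_Icc.1 hs
      rw [padicNorm.mul, padicNorm_harmonicSum hs1 (by omega) (by omega)]
      calc _ ≤ 1 * (p : ℚ) ^ s := by gcongr; exact padicNorm.of_int _
        _ ≤ (p : ℚ) ^ S := by rw [one_mul]; exact pow_le_pow_right₀ hp1.le hsS
    · positivity
  rw [hrel, padicNorm.neg] at htop
  rw [htop] at hrest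
  exact (pow_lt_pow_right₀ hp1 S.lt_succ_self).not_ge hrest

theorem top_eq_zero (h : IsHarmonicRelation (S + 1) P) : P (S + 1) = 0 := by
  obtain ⟨c, hc, hcP⟩ :=
    IsLocalization.exists_mem_forall_smul_eq_map (nonZeroDivisors ℤ) (range (S + 2)) P
  choose! Q hQ using hcP
  have hQrel : IsHarmonicRelation (S + 1) fun s => (Q s).map (algebraMap ℤ ℚ) :=
    (h.smul c).congr fun s hs => hQ s (mem_range.2 (by omega))
  have hQ0 : Q (S + 1) = 0 :=
    eq_zero_of_forall_eval_natCast_eq_zero fun a ha => hQrel.eval_top_eq_zero ha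
  have hcP0 : c • P (S + 1) = 0 := by
    rw [← hQ (S + 1) (mem_range.2 (by omega)), hQ0, Polynomial.map_zero]
  exact (smul_eq_zero.1 hcP0).resolve_left (nonZeroDivisors.ne_zero hc)

end IsHarmonicRelation

/-- The harmonic number functions H_s(n) = ∑_{0<k<n} 1/k^s (s ≥ 1) are
linearly independent over the ring ℚ[n] of polynomial functions of n. -/
theorem stmt_13 (S : ℕ) (P : ℕ → Polynomial ℚ)
    (hrel : ∀ n : ℕ, 1 ≤ n →
      (P 0).eval (n : ℚ) +
        ∑ s ∈ Finset.Icc 1 S,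
          (P s).eval (n : ℚ) * (∑ k ∈ Finset.Ioo 0 n, (1 : ℚ) / (k : ℚ) ^ s) = 0) :
    ∀ s : ℕ, s ≤ S → P s = 0 := by
  induction S with
  | zero =>
    intro s hs
    obtain rfl := Nat.le_zero.1 hs
    exact eq_zero_of_forall_eval_natCast_eq_zero fun n hn => by simpa using hrel n hn
  | succ S ih =>
    have htop : P (S + 1) = 0 := IsHarmonicRelation.top_eq_zero hrel
    intro s hs
    rcases Nat.le_succ_iff.1 hs with hs | rfl
    · exact ih (IsHarmonicRelation.of_succ hrel htop) s hs
    · exact htop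
end

section
/- Let f ∈ ℚ⟨⟨e₀,e₁⟩⟩ with f[∅]=1 be such that f^{-1}e₁f is primitive for the shuffle coproduct (Δ_sh(f^{-1}e₁f) = f^{-1}e₁f ⊗ 1 + 1 ⊗ f^{-1}e₁f) and such that f[e₁^s] = 0 for all s ≥ 1. Then f is grouplike: Δ_sh(f) = f ⊗ f. -/
/-!
Put `u = Δ(f) (f⁻¹ ⊗ f⁻¹)`. As `Δ` is multiplicative and `f⁻¹ e₁ f` is primitive, conjugating
`Δ(e₁) = e₁ ⊗ 1 + 1 ⊗ e₁` by `f⁻¹ ⊗ f⁻¹` shows that `u` commutes with `Δ(e₁)`. Comparing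
coefficients in `u Δ(e₁) = Δ(e₁) u` moves a trailing `e₁` of the left word to its front, so every
coefficient of `u` at a pair of words involving `e₀` vanishes. At pairs of powers of `e₁` the
coefficients of `u` are those of `Δ(f) = u (f ⊗ f)`, because `f[e₁ˢ] = 0` for `s ≥ 1`, and
`Δ(f)[e₁ⁱ ⊗ e₁ʲ]` is a multiple of `f[e₁ⁱ⁺ʲ]`. Hence `u = 1`, that is, `Δ(f) = f ⊗ f`.
-/

open Finset

/-- The multiset of shuffles of two words on {e₀,e₁} (`false` = e₀,
`true` = e₁). -/
def shuffles : List Bool → List Bool → Multiset (List Bool)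
  | [], ys => {ys}
  | x :: xs, [] => {x :: xs}
  | x :: xs, y :: ys =>
      (shuffles xs (y :: ys)).map (x :: ·) + (shuffles (x :: xs) ys).map (y :: ·)
  termination_by xs ys => xs.length + ys.length

/-- Concatenation (convolution) product on ℚ⟨⟨e₀,e₁⟩⟩, where a series is a
family of coefficients indexed by words. -/
noncomputable def conv (a b : List Bool → ℚ) : List Bool → ℚ :=
  fun w => ∑ i ∈ Finset.range (w.length + 1), a (w.take i) * b (w.drop i)

/-- The series e₁. -/
noncomputable def E1 : List Bool → ℚ := fun w => if w = [true] then 1 else 0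

namespace Multiset

theorem singleton_product {α β : Type*} (a : α) (t : Multiset β) :
    ({a} : Multiset α) ×ˢ t = t.map (Prod.mk a) := by
  simp [← cons_zero, cons_product]

theorem bind_singleton_self {α : Type*} (s : Multiset α) : (s.bind fun a => {a}) = s :=
  (bind_singleton s id).trans (map_id s)

theorem map_prodMap_id_product {α β γ : Type*} (f : α → γ) (s : Multiset α) (t : Multiset β) :
    (s ×ˢ t).map (Prod.map f id) = s.map f ×ˢ t := by
  induction s using Multiset.induction_on with
  | empty => simp
  | cons a s ih => simp [cons_product, ih, map_map]

theorem sum_map_mul_product {α β R : Type*} [NonUnitalNonAssocSemiring R] (s : Multiset α)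
    (t : Multiset β) (f : α → R) (g : β → R) :
    ((s ×ˢ t).map fun p => f p.1 * g p.2).sum = (s.map f).sum * (t.map g).sum := by
  induction s using Multiset.induction_on with
  | empty => simp
  | cons a s ih => simp [cons_product, ih, add_mul, sum_map_mul_left]

end Multiset

namespace List

def splits {α : Type*} : List α → Multiset (List α × List α)
  | [] => {([], [])}
  | x :: w => ([], x :: w) ::ₘ (splits w).map (Prod.map (x :: ·) id)

theorem sum_map_splits {α M : Type*} [AddCommMonoid M] (w : List α) (g : List α × List α → M) :
    (w.splits.map g).sum = ∑ i ∈ Finset.range (w.length + 1), g (w.take i, w.drop i) := by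
  induction w generalizing g with
  | nil => simp [splits]
  | cons x w ih =>
    rw [length_cons, Finset.sum_range_succ', splits, Multiset.map_cons, Multiset.sum_cons,
      Multiset.map_map, add_comm, ih]
    rfl

theorem exists_eq_append_cons_replicate {α : Type*} {a : α} {w : List α}
    (h : ∃ b ∈ w, b ≠ a) : ∃ v b k, b ≠ a ∧ w = v ++ b :: replicate k a := by
  induction w with
  | nil => simp at h
  | cons c w ih =>
    by_cases hw : ∃ b ∈ w, b ≠ a
    · obtain ⟨v, b, k, hb, rfl⟩ := ih hw
      exact ⟨c :: v, b, k, hb, rfl⟩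
    · push Not at hw
      refine ⟨[], c, w.length, ?_, ?_⟩
      · obtain ⟨b, hb, hba⟩ := h
        rcases mem_cons.1 hb with rfl | hb
        · exact hba
        · exact absurd (hw b hb) hba
      · rw [nil_append, ← eq_replicate_iff.2 ⟨rfl, hw⟩]

end List

/-- `WordSeries α (WordSeries α R)` serves as the completed tensor square: its product is
concatenation in both tensor factors. -/
structure WordSeries (α R : Type*) where
  coeff : List α → R

namespace WordSeries

variable {α R : Type*}

instance : FunLike (WordSeries α R) (List α) R where
  coe := coeff
  coe_injective _ _ := mk.injEq _ _ |>.mpr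

@[simp] theorem coe_mk (f : List α → R) : ⇑(⟨f⟩ : WordSeries α R) = f := rfl

@[ext] theorem ext {a b : WordSeries α R} (h : ∀ w, a w = b w) : a = b := DFunLike.ext _ _ h

def swap (u : WordSeries α (WordSeries α R)) : WordSeries α (WordSeries α R) :=
  ⟨fun w => ⟨fun w' => u w' w⟩⟩

theorem swap_apply (u : WordSeries α (WordSeries α R)) (w w' : List α) : swap u w w' = u w' w :=
  rfl

section AddCommMonoid

variable [AddCommMonoid R]

instance : Zero (WordSeries α R) := ⟨⟨0⟩⟩

instance : Add (WordSeries α R) := ⟨fun a b => ⟨a + b⟩⟩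

instance : SMul ℕ (WordSeries α R) := ⟨fun n a => ⟨n • ⇑a⟩⟩

instance : AddCommMonoid (WordSeries α R) :=
  DFunLike.coe_injective.addCommMonoid _ rfl (fun _ _ => rfl) (fun _ _ => rfl)

theorem add_apply (a b : WordSeries α R) (w : List α) : (a + b) w = a w + b w := rfl

theorem zero_apply (w : List α) : (0 : WordSeries α R) w = 0 := rfl

theorem sum_apply {ι : Type*} (s : Finset ι) (a : ι → WordSeries α R) (w : List α) :
    (∑ i ∈ s, a i) w = ∑ i ∈ s, a i w :=
  map_sum (⟨⟨fun a => a w, rfl⟩, fun _ _ => rfl⟩ : WordSeries α R →+ R) a s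

theorem swap_add (A B : WordSeries α (WordSeries α R)) : swap (A + B) = swap A + swap B := rfl

end AddCommMonoid

section Semiring

variable [Semiring R]

instance : Mul (WordSeries α R) :=
  ⟨fun a b => ⟨fun w => ∑ i ∈ range (w.length + 1), a (w.take i) * b (w.drop i)⟩⟩

def C (r : R) : WordSeries α R := ⟨fun w => if w = [] then r else 0⟩

instance : One (WordSeries α R) := ⟨C 1⟩

theorem mul_apply (a b : WordSeries α R) (w : List α) :
    (a * b) w = ∑ i ∈ range (w.length + 1), a (w.take i) * b (w.drop i) := rfl

theorem mul_apply_eq_sum_splits (a b : WordSeries α R) (w : List α) :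
    (a * b) w = (w.splits.map fun p => a p.1 * b p.2).sum := by
  rw [List.sum_map_splits]
  rfl

theorem C_apply (r : R) (w : List α) : C r w = if w = [] then r else 0 := rfl

theorem one_apply (w : List α) : (1 : WordSeries α R) w = if w = [] then 1 else 0 := rfl

theorem C_mul_apply (r : R) (a : WordSeries α R) (w : List α) :
    (C r * a : WordSeries α R) w = r * a w := by
  rw [mul_apply, sum_eq_single 0]
  · simp [C_apply]
  · intro i hi hi0
    have hw : w.take i ≠ [] := by
      rw [mem_range] at hi
      rw [Ne, List.take_eq_nil_iff, not_or]
      exact ⟨hi0, by rintro rfl; rw [List.length_nil] at hi; omega⟩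
    rw [C_apply, if_neg hw, zero_mul]
  · simp

theorem mul_C_apply (a : WordSeries α R) (r : R) (w : List α) :
    (a * C r : WordSeries α R) w = a w * r := by
  rw [mul_apply, sum_eq_single w.length]
  · simp [C_apply]
  · intro i hi hiw
    have hw : w.drop i ≠ [] := by
      rw [Ne, List.drop_eq_nil_iff, not_le]
      rw [mem_range] at hi
      omega
    rw [C_apply, if_neg hw, mul_zero]
  · simp

protected theorem mul_assoc (a b c : WordSeries α R) : a * b * c = a * (b * c) := by
  ext w
  have flip := sum_range_diag_flip (w.length + 1)
    fun i j => a (w.take i) * b ((w.drop i).take j) * c (w.drop (i + j))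
  simp only [mul_apply, Finset.sum_mul, Finset.mul_sum]
  convert flip using 1 <;> refine sum_congr rfl fun k hk => ?_ <;> rw [mem_range] at hk
  · rw [List.length_take_of_le (by omega)]
    refine sum_congr rfl fun i hi => ?_
    rw [mem_range] at hi
    rw [List.take_take, min_eq_left (by omega), List.drop_take, Nat.add_sub_cancel' (by omega)]
  · rw [List.length_drop, Nat.sub_add_comm (by omega)]
    refine sum_congr rfl fun j _ => ?_
    rw [List.drop_drop, mul_assoc]

instance : Semiring (WordSeries α R) where
  mul_assoc := WordSeries.mul_assoc
  one_mul a := ext fun w => (C_mul_apply 1 a w).trans (one_mul _)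
  mul_one a := ext fun w => (mul_C_apply a 1 w).trans (mul_one _)
  left_distrib a b c := ext fun w => by simp [mul_apply, add_apply, mul_add, sum_add_distrib]
  right_distrib a b c := ext fun w => by simp [mul_apply, add_apply, add_mul, sum_add_distrib]
  zero_mul a := ext fun w => by simp [mul_apply, zero_apply]
  mul_zero a := ext fun w => by simp [mul_apply, zero_apply]

theorem mul_apply_replicate_of_apply_replicate (a b : WordSeries α R) (x : α) (r : R)
    (hb : ∀ n, b (List.replicate n x) = if n = 0 then r else 0) (n : ℕ) :
    (a * b) (List.replicate n x) = a (List.replicate n x) * r := by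
  rw [mul_apply, sum_eq_single n]
  · rw [List.take_replicate, List.drop_replicate, min_self, Nat.sub_self, hb, if_pos rfl]
  · intro i hi hin
    rw [mem_range, List.length_replicate] at hi
    rw [List.drop_replicate, hb, if_neg (by omega), mul_zero]
  · simp

theorem swap_mul (A B : WordSeries α (WordSeries α R)) : swap (A * B) = swap A * swap B := by
  ext w w'
  simp only [swap_apply, mul_apply, sum_apply]
  exact sum_comm

variable [DecidableEq α]

def letter (a : α) : WordSeries α R := ⟨fun w => if w = [a] then 1 else 0⟩

theorem letter_apply (a : α) (w : List α) :
    (letter a : WordSeries α R) w = if w = [a] then 1 else 0 := rfl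

@[simp] theorem mul_letter_apply_nil (s : WordSeries α R) (a : α) :
    (s * letter a : WordSeries α R) [] = 0 := by
  simp [mul_apply, letter_apply]

@[simp] theorem mul_letter_apply_concat (s : WordSeries α R) (a b : α) (w : List α) :
    (s * letter a : WordSeries α R) (w ++ [b]) = if b = a then s w else 0 := by
  rw [mul_apply, List.length_append, List.length_singleton, sum_range_succ, sum_range_succ,
    sum_eq_zero]
  · simp [letter_apply]
  · intro i hi
    rw [mem_range] at hi
    rw [letter_apply, if_neg, mul_zero]
    intro h
    have := congrArg List.length h
    rw [List.length_drop, List.length_append, List.length_singleton, List.length_singleton] at this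
    omega

@[simp] theorem letter_mul_apply_nil (s : WordSeries α R) (a : α) :
    (letter a * s : WordSeries α R) [] = 0 := by
  simp [mul_apply, letter_apply]

@[simp] theorem letter_mul_apply_cons (s : WordSeries α R) (a b : α) (w : List α) :
    (letter a * s : WordSeries α R) (b :: w) = if b = a then s w else 0 := by
  rw [mul_apply, sum_eq_single 1]
  · simp [letter_apply]
  · intro i hi hi1
    rw [mem_range, List.length_cons] at hi
    rw [letter_apply, if_neg, zero_mul]
    intro h
    have := congrArg List.length h
    rw [List.length_take, List.length_singleton, List.length_cons] at this
    omega
  · simp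

theorem mul_letter_apply_eq_zero (s : WordSeries α R) (a : α) {w : List α}
    (hs : ∀ v : List α, v.length < w.length → s v = 0) :
    (s * letter a : WordSeries α R) w = 0 := by
  rcases List.eq_nil_or_concat' w with rfl | ⟨v, b, rfl⟩
  · exact mul_letter_apply_nil s a
  · rw [mul_letter_apply_concat, hs v (by simp), ite_self]

theorem letter_mul_apply_eq_zero (s : WordSeries α R) (a : α) {w : List α}
    (hs : ∀ v : List α, v.length < w.length → s v = 0) :
    (letter a * s : WordSeries α R) w = 0 := by
  cases w with
  | nil => exact letter_mul_apply_nil s a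
  | cons b v => rw [letter_mul_apply_cons, hs v (by simp), ite_self]

end Semiring

section CommSemiring

variable [CommSemiring R]

def tmul (a b : WordSeries α R) : WordSeries α (WordSeries α R) := ⟨fun w => ⟨fun w' => a w * b w'⟩⟩

theorem tmul_apply (a b : WordSeries α R) (w w' : List α) : tmul a b w w' = a w * b w' := rfl

theorem tmul_mul_tmul (a b c d : WordSeries α R) :
    tmul a b * tmul c d = tmul (a * c) (b * d) := by
  ext w w'
  simp only [mul_apply, sum_apply, tmul_apply, Finset.sum_mul_sum]
  exact sum_congr rfl fun i _ => sum_congr rfl fun j _ => by ring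

theorem tmul_one_one : tmul (1 : WordSeries α R) 1 = 1 := by
  ext w w'
  by_cases hw : w = [] <;> simp [tmul_apply, one_apply, zero_apply, hw]

theorem swap_tmul (a b : WordSeries α R) : swap (tmul a b) = tmul b a := by
  ext w w'
  exact mul_comm _ _

theorem mul_tmul_self_apply_replicate (u : WordSeries α (WordSeries α R)) {f : WordSeries α R}
    {x : α} (hf : ∀ n, f (List.replicate n x) = if n = 0 then 1 else 0) (i j : ℕ) :
    (u * tmul f f) (List.replicate i x) (List.replicate j x) =
      u (List.replicate i x) (List.replicate j x) := by
  have hff (n : ℕ) : tmul f f (List.replicate n x) = if n = 0 then f else 0 := by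
    ext w
    rw [tmul_apply, hf]
    split_ifs <;> simp [zero_apply]
  rw [mul_apply_replicate_of_apply_replicate _ _ x _ hff,
    mul_apply_replicate_of_apply_replicate _ _ x _ hf, mul_one]

variable [DecidableEq α]

theorem tmul_letter_one (a : α) : tmul (letter a : WordSeries α R) 1 = letter a := by
  ext w w'
  by_cases hw : w = [a] <;> simp [tmul_apply, one_apply, letter_apply, zero_apply, hw]

theorem tmul_one_letter (a : α) : tmul 1 (letter a : WordSeries α R) = C (letter a) := by
  ext w w'
  by_cases hw : w = [] <;> simp [tmul_apply, one_apply, C_apply, zero_apply, hw]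

theorem apply_eq_mul_letter_apply_cons {u : WordSeries α (WordSeries α R)} {a : α}
    (hu : Commute u (tmul (letter a) 1 + tmul 1 (letter a))) {w w' : List α}
    (h : ∀ v : List α, v.length < w'.length → u (a :: w) v = 0) :
    u w w' = (u * letter a : WordSeries α (WordSeries α R)) (a :: w) w' := by
  have := congrArg (fun A => A (a :: w) w') hu.eq
  simp only [tmul_letter_one, tmul_one_letter, mul_add, add_mul, add_apply, mul_C_apply,
    C_mul_apply, letter_mul_apply_cons, mul_letter_apply_eq_zero _ _ h,
    letter_mul_apply_eq_zero _ _ h, add_zero, if_true] at this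
  exact this.symm

-- Writing `w = v ++ b :: a ^ k` with `b ≠ a`, the previous lemma rotates the `k` trailing
-- letters `a` to the front one at a time, ending at a word `v' ++ [b]` where `u * letter a`
-- vanishes.
theorem apply_eq_zero_of_commute_of_exists_ne {u : WordSeries α (WordSeries α R)} {a : α}
    (hu : Commute u (tmul (letter a) 1 + tmul 1 (letter a))) {w w' : List α}
    (hw : ∃ b ∈ w, b ≠ a) : u w w' = 0 := by
  induction hn : w'.length using Nat.strong_induction_on generalizing w w' with
  | _ n ih =>
  have short (w v : List α) (hw : ∃ b ∈ w, b ≠ a) (hv : v.length < w'.length) : u w v = 0 :=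
    ih _ (hn ▸ hv) hw rfl
  obtain ⟨v, b, k, hb, rfl⟩ := List.exists_eq_append_cons_replicate hw
  clear hw
  induction k generalizing v with
  | zero =>
    rw [apply_eq_mul_letter_apply_cons hu (short _ · ⟨b, by simp, hb⟩), List.replicate_zero,
      ← List.cons_append, mul_letter_apply_concat, if_neg hb, zero_apply]
  | succ k ihk =>
    rw [apply_eq_mul_letter_apply_cons hu (short _ · ⟨b, by simp, hb⟩), List.replicate_succ',
      ← List.cons_append, ← List.cons_append, ← List.append_assoc, mul_letter_apply_concat,
      if_pos rfl]
    exact ihk (a :: v)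

theorem apply_eq_zero_of_commute {u : WordSeries α (WordSeries α R)} {a : α}
    (hu : Commute u (tmul (letter a) 1 + tmul 1 (letter a))) {w w' : List α}
    (h : ∃ b ∈ w ++ w', b ≠ a) : u w w' = 0 := by
  obtain ⟨b, hb, hba⟩ := h
  rcases List.mem_append.1 hb with hb | hb
  · exact apply_eq_zero_of_commute_of_exists_ne hu ⟨b, hb, hba⟩
  · have hswap : Commute (swap u) (tmul (letter a) 1 + tmul 1 (letter a)) := by
      have := congrArg swap hu.eq
      rwa [swap_mul, swap_mul, swap_add, swap_tmul, swap_tmul, add_comm] at this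
    exact apply_eq_zero_of_commute_of_exists_ne hswap ⟨b, hb, hba⟩

theorem eq_one_of_commute {u : WordSeries α (WordSeries α R)} {a : α}
    (hu : Commute u (tmul (letter a) 1 + tmul 1 (letter a)))
    (h : ∀ i j, u (List.replicate i a) (List.replicate j a) = if i = 0 ∧ j = 0 then 1 else 0) :
    u = 1 := by
  ext w w'
  rw [← tmul_one_one, tmul_apply, one_apply, one_apply]
  by_cases hw : ∃ b ∈ w ++ w', b ≠ a
  · rw [apply_eq_zero_of_commute hu hw]
    obtain ⟨b, hb, -⟩ := hw
    rcases List.mem_append.1 hb with hb | hb <;> simp [List.ne_nil_of_mem hb]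
  · push Not at hw
    rw [List.eq_replicate_iff.2 ⟨rfl, fun b hb => hw b (List.mem_append_left _ hb)⟩,
      List.eq_replicate_iff.2 ⟨rfl, fun b hb => hw b (List.mem_append_right _ hb)⟩, h]
    by_cases hw₁ : w = [] <;> by_cases hw₂ : w' = [] <;> simp [hw₁, hw₂]

end CommSemiring

end WordSeries

@[simp] theorem shuffles_nil_left (w : List Bool) : shuffles [] w = {w} := by
  simp [shuffles]

@[simp] theorem shuffles_nil_right (w : List Bool) : shuffles w [] = {w} := by
  cases w <;> simp [shuffles]

theorem shuffles_cons_cons (x y : Bool) (xs ys : List Bool) :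
    shuffles (x :: xs) (y :: ys) =
      (shuffles xs (y :: ys)).map (x :: ·) + (shuffles (x :: xs) ys).map (y :: ·) := by
  simp [shuffles]

theorem perm_of_mem_shuffles {w w' s : List Bool} (hs : s ∈ shuffles w w') :
    s.Perm (w ++ w') := by
  induction w, w' using shuffles.induct generalizing s with
  | case1 w' => simp_all
  | case2 x w => simp_all
  | case3 x xs y ys ih₁ ih₂ =>
    rw [shuffles_cons_cons, Multiset.mem_add, Multiset.mem_map, Multiset.mem_map] at hs
    rcases hs with ⟨t, ht, rfl⟩ | ⟨t, ht, rfl⟩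
    · exact (ih₁ ht).cons x
    · exact ((ih₂ ht).cons y).trans List.perm_middle.symm

theorem shuffles_bind_splits (w w' : List Bool) :
    (shuffles w w').bind List.splits =
      w.splits.bind fun p => w'.splits.bind fun q => shuffles p.1 q.1 ×ˢ shuffles p.2 q.2 := by
  induction w, w' using shuffles.induct with
  | case1 w' => simp [List.splits, Multiset.singleton_product, Multiset.bind_singleton_self]
  | case2 x w => simp [List.splits, Multiset.singleton_product, Multiset.bind_singleton_self]
  | case3 x xs y ys ih₁ ih₂ =>
    rw [shuffles_cons_cons, Multiset.add_bind, Multiset.bind_map, Multiset.bind_map]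
    simp only [List.splits, Multiset.bind_cons, ← Multiset.map_bind]
    rw [ih₁, ih₂]
    simp only [List.splits, Multiset.cons_bind, shuffles_nil_right, Multiset.singleton_product,
      Multiset.bind_map, Prod.map_fst, Prod.map_snd, id_eq, Multiset.bind_add, Multiset.map_add,
      Multiset.map_bind, Multiset.map_map, Function.comp_apply, Prod.map_apply,
      Multiset.map_prodMap_id_product, shuffles_nil_left, shuffles_cons_cons, Multiset.add_product]
    abel

namespace WordSeries

section ShuffleCoproduct

variable {R : Type*}

def shuffleCoprod [AddCommMonoid R] (a : WordSeries Bool R) :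
    WordSeries Bool (WordSeries Bool R) :=
  ⟨fun w => ⟨fun w' => ((shuffles w w').map a).sum⟩⟩

theorem shuffleCoprod_apply [AddCommMonoid R] (a : WordSeries Bool R) (w w' : List Bool) :
    shuffleCoprod a w w' = ((shuffles w w').map a).sum := rfl

theorem shuffleCoprod_apply_replicate [AddCommMonoid R] (a : WordSeries Bool R) (x : Bool)
    (i j : ℕ) :
    shuffleCoprod a (List.replicate i x) (List.replicate j x) =
      Multiset.card (shuffles (List.replicate i x) (List.replicate j x)) •
        a (List.replicate (i + j) x) := by
  rw [shuffleCoprod_apply, Multiset.map_congr rfl (g := fun _ => a (List.replicate (i + j) x)),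
    Multiset.map_const', Multiset.sum_replicate]
  intro s hs
  rw [List.perm_replicate.1 ((perm_of_mem_shuffles hs).trans (by rw [List.replicate_add]))]

theorem shuffleCoprod_mul [Semiring R] (a b : WordSeries Bool R) :
    shuffleCoprod (a * b) = shuffleCoprod a * shuffleCoprod b := by
  ext w w'
  calc shuffleCoprod (a * b) w w'
      = (((shuffles w w').bind List.splits).map fun p => a p.1 * b p.2).sum := by
        rw [shuffleCoprod_apply, Multiset.map_bind, Multiset.sum_bind]
        exact congrArg _ (Multiset.map_congr rfl fun s _ => mul_apply_eq_sum_splits a b s)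
    _ = (shuffleCoprod a * shuffleCoprod b) w w' := by
        simp only [shuffles_bind_splits, Multiset.map_bind, Multiset.sum_bind,
          List.sum_map_splits, mul_apply, sum_apply, shuffleCoprod_apply]
        simp only [Multiset.sum_map_mul_product]

theorem shuffleCoprod_letter [CommSemiring R] (x : Bool) :
    shuffleCoprod (letter x : WordSeries Bool R) = tmul (letter x) 1 + tmul 1 (letter x) := by
  ext w w'
  rcases w with _ | ⟨b, w⟩
  · simp [shuffleCoprod_apply, tmul_apply, add_apply, one_apply, letter_apply]
  rcases w' with _ | ⟨b', w'⟩
  · simp [shuffleCoprod_apply, tmul_apply, add_apply, one_apply, letter_apply]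
  have hzero : ∀ s ∈ shuffles (b :: w) (b' :: w'), (letter x : WordSeries Bool R) s = 0 := by
    intro s hs
    have hlen := (perm_of_mem_shuffles hs).length_eq
    rw [letter_apply, if_neg]
    rintro rfl
    simp at hlen
  rw [shuffleCoprod_apply, Multiset.sum_eq_zero (by simpa using hzero)]
  simp [tmul_apply, add_apply, one_apply]

variable [CommSemiring R] {f f' : WordSeries Bool R} {x : Bool}

theorem commute_shuffleCoprod_mul_tmul (hff' : f * f' = 1)
    (hprim : shuffleCoprod (f' * (letter x * f)) =
      tmul (f' * (letter x * f)) 1 + tmul 1 (f' * (letter x * f))) :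
    Commute (shuffleCoprod f * tmul f' f') (tmul (letter x) 1 + tmul 1 (letter x)) := by
  have hconj : tmul f' f' * (tmul (letter x) 1 + tmul 1 (letter x)) =
      shuffleCoprod (f' * (letter x * f)) * tmul f' f' := by
    have hgf' : f' * (letter x * f) * f' = f' * letter x := by
      rw [mul_assoc, mul_assoc, hff', mul_one]
    rw [hprim, add_mul, mul_add, tmul_mul_tmul, tmul_mul_tmul, tmul_mul_tmul, tmul_mul_tmul, hgf',
      one_mul, mul_one]
  have hfg : f * (f' * (letter x * f)) = letter x * f := by rw [← mul_assoc, hff', one_mul]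
  calc shuffleCoprod f * tmul f' f' * (tmul (letter x) 1 + tmul 1 (letter x))
      = shuffleCoprod (f * (f' * (letter x * f))) * tmul f' f' := by
        rw [mul_assoc, hconj, ← mul_assoc, ← shuffleCoprod_mul]
    _ = (tmul (letter x) 1 + tmul 1 (letter x)) * (shuffleCoprod f * tmul f' f') := by
        rw [hfg, shuffleCoprod_mul, shuffleCoprod_letter, mul_assoc]

theorem shuffleCoprod_eq_tmul_self
    (hf : ∀ n, f (List.replicate n x) = if n = 0 then 1 else 0)
    (hf'f : f' * f = 1) (hff' : f * f' = 1)
    (hprim : shuffleCoprod (f' * (letter x * f)) =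
      tmul (f' * (letter x * f)) 1 + tmul 1 (f' * (letter x * f))) :
    shuffleCoprod f = tmul f f := by
  have hDf : shuffleCoprod f = shuffleCoprod f * tmul f' f' * tmul f f := by
    rw [mul_assoc, tmul_mul_tmul, hf'f, tmul_one_one, mul_one]
  have hu : shuffleCoprod f * tmul f' f' = 1 :=
    eq_one_of_commute (commute_shuffleCoprod_mul_tmul hff' hprim) fun i j => by
      rw [← mul_tmul_self_apply_replicate _ hf, ← hDf, shuffleCoprod_apply_replicate, hf]
      rcases i with _ | i <;> rcases j with _ | j <;> simp
  rw [hDf, hu, one_mul]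

end ShuffleCoproduct

end WordSeries

/-- Converse direction (b ⇒ a of Proposition 7.3): if f[∅] = 1,
f[e₁^s] = 0 for all s ≥ 1, and f⁻¹e₁f is primitive for the shuffle
coproduct, then f is grouplike: Δ_sh(f) = f ⊗ f. Here Δ_sh(f)[w⊗w'] is the
value of f on the shuffle product w ⧢ w'. -/
theorem stmt_18 (f fi : List Bool → ℚ) (hf1 : f [] = 1)
    (hfe1 : ∀ s : ℕ, 1 ≤ s → f (List.replicate s true) = 0)
    (hfi : ∀ w, conv fi f w = if w = [] then 1 else 0)
    (hfi' : ∀ w, conv f fi w = if w = [] then 1 else 0)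
    (hprim : ∀ w w' : List Bool,
      ((shuffles w w').map (conv fi (conv E1 f))).sum =
        (if w' = [] then conv fi (conv E1 f) w else 0) +
          (if w = [] then conv fi (conv E1 f) w' else 0)) :
    ∀ w w' : List Bool, ((shuffles w w').map f).sum = f w * f w' := by
  have hf : ∀ n, (⟨f⟩ : WordSeries Bool ℚ) (List.replicate n true) = if n = 0 then 1 else 0 := by
    rintro (_ | n)
    · exact hf1
    · exact hfe1 (n + 1) n.succ_pos
  have hg : (⟨fi⟩ * (WordSeries.letter true * ⟨f⟩) : WordSeries Bool ℚ) =
      ⟨conv fi (conv E1 f)⟩ := rfl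
  have key := WordSeries.shuffleCoprod_eq_tmul_self (f' := ⟨fi⟩) hf (WordSeries.ext hfi)
    (WordSeries.ext hfi') (by
      ext w w'
      simpa [hg, WordSeries.shuffleCoprod_apply, WordSeries.tmul_apply, WordSeries.add_apply,
        WordSeries.one_apply] using hprim w w')
  exact fun w w' => congrArg (fun A => A w w') key
end
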